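/- Let k be an algebraically closed field and grade the polynomial ring k[x,y,z] by total degree. The degree-zero part of the localization of k[x,y,z] away from the element y·z is isomorphic as a k-algebra to the degree-zero part of the localization of k[x,y,z] away from the element (x² − y·z)·z. (Equivalently: the reducible curves {yz = 0} of degree 2 and {(x² − yz)z = 0} of degree 3 have isomorphic complements in ℙ², so the equal-degree conclusion of Lemma 2.1 fails for reducible curves.) -/

import Mathlib

/-!
The quadratic involution `φ : (x, y, z) ↦ (xz, x² − yz, z²)` of `k[x,y,z]` doubles degrees and
satisfies `φ(yz) · (x² − yz) = ((x² − yz)z)²` and `φ((x² − yz)z) · y⁴ = (yz)⁵`, so it induces ring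
maps `k[x,y,z]_{yz} ⇄ k[x,y,z]_{(x² − yz)z}` which send fractions of degree zero to fractions of
degree zero. Moreover `φ ∘ φ` multiplies a form of degree `i` by `z³ⁱ`; as `z` divides both
equations it is a unit in both localizations, and on a fraction of degree zero these factors cancel,
so the two induced maps are mutually inverse on the degree-zero parts.
-/

open MvPolynomial

attribute [local instance] MvPolynomial.gradedAlgebra

/-- The degree-zero part `A_h` of the localization of `k[x,y,z]` away from `h`,
i.e. the coordinate ring of the affine variety `ℙ² ∖ V(h)`. -/
noncomputable abbrev AwayRing (k : Type) [Field k] (h : MvPolynomial (Fin 3) k) : Type :=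
  HomogeneousLocalization.Away (homogeneousSubmodule (Fin 3) k) h

noncomputable instance (k : Type) [Field k] (h : MvPolynomial (Fin 3) k) :
    Algebra k (AwayRing k h) :=
  ((algebraMap (homogeneousSubmodule (Fin 3) k 0) (AwayRing k h)).comp
    (algebraMap k (homogeneousSubmodule (Fin 3) k 0))).toAlgebra

theorem MvPolynomial.IsHomogeneous.aeval_mul_left {σ R S : Type*} [CommSemiring R]
    [CommSemiring S] [Algebra R S] {p : MvPolynomial σ R} {n : ℕ} (hp : p.IsHomogeneous n)
    (t : S) (x : σ → S) :
    MvPolynomial.aeval (fun j => t * x j) p = t ^ n * MvPolynomial.aeval x p := by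
  simp only [aeval_def, eval₂_eq, Finset.mul_sum]
  refine Finset.sum_congr rfl fun d hd => ?_
  have hdeg : ∑ j ∈ d.support, d j = n := by
    rw [← hp (mem_support_iff.mp hd)]
    exact DFunLike.congr_fun Finsupp.degree_eq_weight_one d
  simp only [mul_pow, Finset.prod_mul_distrib, Finset.prod_pow_eq_pow_sum, hdeg]
  ring

namespace Localization

variable {A B : Type*} [CommRing A] [CommRing B]

theorem algebraMap_mul_mk_eq_one_of_mul_eq_pow {g b u : B} {m : ℕ} (h : b * u = g ^ m) :
    algebraMap B (Away g) b * mk u (⟨g ^ m, m, rfl⟩ : Submonoid.powers g) = 1 := by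
  rw [← mk_one_eq_algebraMap, mk_mul, one_mul, h]
  exact mk_self (⟨g ^ m, m, rfl⟩ : Submonoid.powers g)

noncomputable def awayLiftOfMulEqPow (φ : A →+* B) {f : A} {g u : B} {m : ℕ}
    (h : φ f * u = g ^ m) : Away f →+* Away g :=
  awayLift ((algebraMap B _).comp φ) f <|
    isUnit_iff_exists_inv.mpr ⟨_, algebraMap_mul_mk_eq_one_of_mul_eq_pow h⟩

variable (φ : A →+* B) {f : A} {g u : B} {m : ℕ} (h : φ f * u = g ^ m)

theorem awayLiftOfMulEqPow_algebraMap (a : A) :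
    awayLiftOfMulEqPow φ h (algebraMap A _ a) = algebraMap B _ (φ a) :=
  IsLocalization.lift_eq _ _

theorem awayLiftOfMulEqPow_mk (a : A) (n : ℕ) :
    awayLiftOfMulEqPow φ h (mk a (⟨f ^ n, n, rfl⟩ : Submonoid.powers f)) =
      mk (φ a * u ^ n) (⟨(g ^ m) ^ n, m * n, pow_mul g m n⟩ : Submonoid.powers g) := by
  rw [awayLiftOfMulEqPow,
    awayLift_mk ((algebraMap B _).comp φ) f a _ (algebraMap_mul_mk_eq_one_of_mul_eq_pow h),
    mk_pow, RingHom.comp_apply, ← mk_one_eq_algebraMap, mk_mul, one_mul]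
  rfl

theorem awayLiftOfMulEqPow_comp_algebraMap {C : Type*} [CommRing C] (ψ : B →+* C)
    {f' u' : C} {m' : ℕ} (h' : ψ g * u' = f' ^ m') (a : A) :
    (awayLiftOfMulEqPow ψ h').comp (awayLiftOfMulEqPow φ h) (algebraMap A _ a) =
      algebraMap C _ (ψ (φ a)) := by
  rw [RingHom.comp_apply, awayLiftOfMulEqPow_algebraMap, awayLiftOfMulEqPow_algebraMap]

end Localization

namespace HomogeneousLocalization

variable {A B σ τ : Type*} [CommRing A] [CommRing B] [SetLike σ A] [AddSubgroupClass σ A]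
  [SetLike τ B] [AddSubgroupClass τ B] {𝒜 : ℕ → σ} [GradedRing 𝒜] {ℬ : ℕ → τ} [GradedRing ℬ]

section restrict

variable {P : Submonoid A} {Q : Submonoid B} (Φ : Localization P →+* Localization Q)
  (hΦ : ∀ x : HomogeneousLocalization 𝒜 P, ∃ y : HomogeneousLocalization ℬ Q, y.val = Φ x.val)

noncomputable def restrict : HomogeneousLocalization 𝒜 P →+* HomogeneousLocalization ℬ Q where
  toFun x := (hΦ x).choose
  map_one' := val_injective _ <| by rw [(hΦ 1).choose_spec, val_one, map_one, val_one]
  map_mul' x y := val_injective _ <| by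
    rw [(hΦ _).choose_spec, val_mul, val_mul, map_mul, (hΦ x).choose_spec, (hΦ y).choose_spec]
  map_zero' := val_injective _ <| by rw [(hΦ 0).choose_spec, val_zero, map_zero, val_zero]
  map_add' x y := val_injective _ <| by
    rw [(hΦ _).choose_spec, val_add, val_add, map_add, (hΦ x).choose_spec, (hΦ y).choose_spec]

theorem val_restrict (x : HomogeneousLocalization 𝒜 P) : (restrict Φ hΦ x).val = Φ x.val :=
  (hΦ x).choose_spec

noncomputable def restrictEquiv (Ψ : Localization Q →+* Localization P)
    (hΨ : ∀ y : HomogeneousLocalization ℬ Q, ∃ x : HomogeneousLocalization 𝒜 P, x.val = Ψ y.val)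
    (hΨΦ : ∀ x : HomogeneousLocalization 𝒜 P, Ψ (Φ x.val) = x.val)
    (hΦΨ : ∀ y : HomogeneousLocalization ℬ Q, Φ (Ψ y.val) = y.val) :
    HomogeneousLocalization 𝒜 P ≃+* HomogeneousLocalization ℬ Q :=
  .ofRingHom (restrict Φ hΦ) (restrict Ψ hΨ)
    (RingHom.ext fun y => val_injective _ <| by
      rw [RingHom.comp_apply, val_restrict, val_restrict, hΦΨ, RingHom.id_apply])
    (RingHom.ext fun x => val_injective _ <| by
      rw [RingHom.comp_apply, val_restrict, val_restrict, hΨΦ, RingHom.id_apply])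

theorem val_restrictEquiv (Ψ : Localization Q →+* Localization P) (hΨ hΨΦ hΦΨ)
    (x : HomogeneousLocalization 𝒜 P) : (restrictEquiv Φ hΦ Ψ hΨ hΨΦ hΦΨ x).val = Φ x.val :=
  val_restrict Φ hΦ x

end restrict

open Localization in
theorem Away.exists_val_eq_awayLiftOfMulEqPow {φ : A →+* B} {c : ℕ}
    (hφ : ∀ i, ∀ a ∈ 𝒜 i, φ a ∈ ℬ (c * i)) {f : A} {g u : B} {d e e' m : ℕ} (hf : f ∈ 𝒜 d)
    (hg : g ∈ ℬ e) (hu : u ∈ ℬ e') (hfu : φ f * u = g ^ m) (hdeg : c * d + e' = m * e)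
    (x : Away 𝒜 f) : ∃ y : Away ℬ g, y.val = awayLiftOfMulEqPow φ hfu x.val := by
  obtain ⟨n, a, ha, rfl⟩ := Away.mk_surjective 𝒜 hf x
  have hnum : φ a * u ^ n ∈ ℬ ((m * n) • e) := by
    convert SetLike.mul_mem_graded (hφ _ a ha) (SetLike.pow_mem_graded n hu) using 2
    simp only [smul_eq_mul]
    rw [show m * n * e = n * (m * e) by ring, ← hdeg]
    ring
  refine ⟨Away.mk ℬ hg (m * n) _ hnum, ?_⟩
  rw [Away.val_mk, Away.val_mk, awayLiftOfMulEqPow_mk]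
  congr 2
  exact pow_mul g m n

theorem Away.apply_val_eq_of_algebraMap_pow_mul {f t : A} {d : ℕ} (hf : f ∈ 𝒜 d)
    (ht : IsUnit (algebraMap A (Localization.Away f) t))
    (Θ : Localization.Away f →+* Localization.Away f)
    (hΘ : ∀ i, ∀ a ∈ 𝒜 i, Θ (algebraMap A _ a) = algebraMap A _ (t ^ i * a))
    (x : Away 𝒜 f) : Θ x.val = x.val := by
  obtain ⟨n, a, ha, rfl⟩ := Away.mk_surjective 𝒜 hf x
  have hunit : IsUnit (algebraMap A (Localization.Away f) (t ^ (n • d) * f ^ n)) := by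
    rw [map_mul, map_pow, map_pow]
    exact (ht.pow _).mul ((IsLocalization.Away.algebraMap_isUnit f).pow n)
  have hv : (Away.mk 𝒜 hf n a ha).val * algebraMap A _ (f ^ n) = algebraMap A _ a := by
    rw [Away.val_mk, Localization.mk_eq_mk']
    exact IsLocalization.mk'_spec _ _ _
  set v := (Away.mk 𝒜 hf n a ha).val
  refine hunit.mul_right_cancel ?_
  calc Θ v * algebraMap A _ (t ^ (n • d) * f ^ n) = Θ (v * algebraMap A _ (f ^ n)) := by
        rw [map_mul Θ, hΘ _ _ (SetLike.pow_mem_graded n hf)]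
    _ = algebraMap A _ (t ^ (n • d) * a) := by rw [hv, hΘ _ _ ha]
    _ = v * algebraMap A _ (t ^ (n • d) * f ^ n) := by rw [map_mul, map_mul, ← hv]; ring

end HomogeneousLocalization

namespace MvPolynomial

variable {σ R : Type*} [CommRing R]

theorem isHomogeneous_X_mul_X (i j : σ) : (X i * X j : MvPolynomial σ R).IsHomogeneous 2 :=
  (isHomogeneous_X R i).mul (isHomogeneous_X R j)

variable (R) in
noncomputable def quadraticInvolution : MvPolynomial (Fin 3) R →ₐ[R] MvPolynomial (Fin 3) R :=
  aeval ![X 0 * X 2, X 0 ^ 2 - X 1 * X 2, X 2 ^ 2]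

@[simp]
theorem quadraticInvolution_X0 : quadraticInvolution R (X 0) = X 0 * X 2 := by
  simp [quadraticInvolution]

@[simp]
theorem quadraticInvolution_X1 : quadraticInvolution R (X 1) = X 0 ^ 2 - X 1 * X 2 := by
  simp [quadraticInvolution]

@[simp]
theorem quadraticInvolution_X2 : quadraticInvolution R (X 2) = X 2 ^ 2 := by
  simp [quadraticInvolution]

theorem quadraticInvolution_mem_homogeneousSubmodule (n : ℕ) :
    ∀ p ∈ homogeneousSubmodule (Fin 3) R n,
      quadraticInvolution R p ∈ homogeneousSubmodule (Fin 3) R (2 * n) := by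
  refine fun p hp => IsHomogeneous.aeval hp _ fun j => ?_
  fin_cases j
  · exact isHomogeneous_X_mul_X 0 2
  · exact (isHomogeneous_X_pow 0 2).sub (isHomogeneous_X_mul_X 1 2)
  · exact isHomogeneous_X_pow 2 2

theorem quadraticInvolution_comp_self :
    (quadraticInvolution R).comp (quadraticInvolution R) = aeval fun j => X 2 ^ 3 * X j := by
  ext j : 1
  fin_cases j <;>
    simp only [Fin.zero_eta, Fin.mk_one, Fin.reduceFinMk, AlgHom.comp_apply, aeval_X, map_mul,
      map_sub, map_pow, quadraticInvolution_X0, quadraticInvolution_X1, quadraticInvolution_X2] <;>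
    ring

theorem quadraticInvolution_quadraticInvolution {n : ℕ} {p : MvPolynomial (Fin 3) R}
    (hp : p.IsHomogeneous n) :
    quadraticInvolution R (quadraticInvolution R p) = (X 2 ^ 3) ^ n * p := by
  rw [← AlgHom.comp_apply, quadraticInvolution_comp_self, hp.aeval_mul_left, aeval_X_left_apply]

theorem quadraticInvolution_X1_mul_X2_mul :
    quadraticInvolution R (X 1 * X 2) * (X 0 ^ 2 - X 1 * X 2) =
      ((X 0 ^ 2 - X 1 * X 2) * X 2) ^ 2 := by
  rw [map_mul, quadraticInvolution_X1, quadraticInvolution_X2]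
  ring

theorem quadraticInvolution_conic_mul_X2_mul :
    quadraticInvolution R ((X 0 ^ 2 - X 1 * X 2) * X 2) * X 1 ^ 4 = (X 1 * X 2) ^ 5 := by
  simp only [map_mul, map_sub, map_pow, quadraticInvolution_X0, quadraticInvolution_X1,
    quadraticInvolution_X2]
  ring

theorem isUnit_algebraMap_X2_pow (f : MvPolynomial (Fin 3) R) (n : ℕ) :
    IsUnit (algebraMap _ (Localization.Away (f * X 2)) ((X 2 : MvPolynomial (Fin 3) R) ^ n)) := by
  rw [map_pow]
  exact (IsLocalization.Away.isUnit_of_dvd (f * X 2) (dvd_mul_left _ _)).pow n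

end MvPolynomial

theorem AwayRing.val_algebraMap {k : Type} [Field k] (h : MvPolynomial (Fin 3) k) (c : k) :
    (algebraMap k (AwayRing k h) c).val = algebraMap (MvPolynomial (Fin 3) k) _ (C c) :=
  rfl

open HomogeneousLocalization Localization in
theorem complement_iso_of_reducible_curves_general (k : Type) [Field k] :
    Nonempty
      (AwayRing k ((X 1 : MvPolynomial (Fin 3) k) * X 2) ≃ₐ[k]
        AwayRing k (((X 0 : MvPolynomial (Fin 3) k) ^ 2 - X 1 * X 2) * X 2)) := by
  let 𝒜 := homogeneousSubmodule (Fin 3) k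
  have hf : X 1 * X 2 ∈ 𝒜 2 := isHomogeneous_X_mul_X 1 2
  have hq : X 0 ^ 2 - X 1 * X 2 ∈ 𝒜 2 := (isHomogeneous_X_pow 0 2).sub hf
  have hg : (X 0 ^ 2 - X 1 * X 2) * X 2 ∈ 𝒜 3 := IsHomogeneous.mul hq (isHomogeneous_X k 2)
  have hy : X 1 ^ 4 ∈ 𝒜 4 := isHomogeneous_X_pow 1 4
  let φ := (quadraticInvolution k).toRingHom
  have hφφ : ∀ i, ∀ a ∈ 𝒜 i, φ (φ a) = (X 2 ^ 3) ^ i * a :=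
    fun _ _ => quadraticInvolution_quadraticInvolution
  let Φ := awayLiftOfMulEqPow φ quadraticInvolution_X1_mul_X2_mul
  let Ψ := awayLiftOfMulEqPow φ quadraticInvolution_conic_mul_X2_mul
  have hΨΦ := Away.apply_val_eq_of_algebraMap_pow_mul hf (isUnit_algebraMap_X2_pow _ 3)
    (Ψ.comp Φ) fun i a ha => by rw [awayLiftOfMulEqPow_comp_algebraMap, hφφ i a ha]
  have hΦΨ := Away.apply_val_eq_of_algebraMap_pow_mul hg (isUnit_algebraMap_X2_pow _ 3)
    (Φ.comp Ψ) fun i a ha => by rw [awayLiftOfMulEqPow_comp_algebraMap, hφφ i a ha]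
  let e := restrictEquiv
    Φ (Away.exists_val_eq_awayLiftOfMulEqPow quadraticInvolution_mem_homogeneousSubmodule
      hf hg hq _ (by norm_num))
    Ψ (Away.exists_val_eq_awayLiftOfMulEqPow quadraticInvolution_mem_homogeneousSubmodule
      hg hf hy _ (by norm_num))
    hΨΦ hΦΨ
  refine ⟨AlgEquiv.ofRingEquiv (f := e) fun c => val_injective _ ?_⟩
  rw [val_restrictEquiv, AwayRing.val_algebraMap, AwayRing.val_algebraMap,
    awayLiftOfMulEqPow_algebraMap]
  exact congrArg _ ((quadraticInvolution k).commutes c)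

/-- Remark 2.2: the reducible curves `{yz = 0}` (degree 2) and `{(x² − yz)z = 0}`
(degree 3) have isomorphic complements in `ℙ²`: the degree-zero localizations away from
`y·z` and away from `(x² − y·z)·z` are isomorphic as `k`-algebras. In particular the
equal-degree conclusion of Lemma 2.1 fails for reducible curves. -/
theorem complement_iso_of_reducible_curves (k : Type) [Field k] [IsAlgClosed k] :
    Nonempty
      (AwayRing k ((X 1 : MvPolynomial (Fin 3) k) * X 2) ≃ₐ[k]
        AwayRing k (((X 0 : MvPolynomial (Fin 3) k) ^ 2 - X 1 * X 2) * X 2)) :=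
  complement_iso_of_reducible_curves_general k
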